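/- Let η = e^{iπ/4} and let a be the diagonal 4×4 unitary matrix η^{1/4}·diag(η, η², η⁴, 1) of order 8 (modulo the center of SU(4)). Then there is no invertible 4×4 complex matrix b satisfying a b = b a³ · i^r for any integer r. -/

import Mathlib

open Complex

/-- The matrix `a = η^{1/4} · diag(η, η², η⁴, 1)` with `η = e^{iπ/4}`, generating the
`ℤ₈` symmetry of the 4HDM. -/
noncomputable def aZ8 : Matrix (Fin 4) (Fin 4) ℂ :=
  Complex.exp ((Real.pi : ℂ) * I / 16) •
    Matrix.diagonal ![Complex.exp ((Real.pi : ℂ) * I / 4),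
      Complex.exp ((Real.pi : ℂ) * I / 2), Complex.exp ((Real.pi : ℂ) * I), 1]

/-! Every eigenvalue `λ` of `a` has `λ⁸ = i`, while every eigenvalue `μ` of `i^r a³` has
`μ⁸ = i³ = -i`. So the spectra of `a` and `i^r a³` are disjoint, and a matrix `b`
intertwining two diagonal matrices with disjoint spectra vanishes; hence `b` is not
invertible. -/

theorem Matrix.eq_zero_of_diagonal_mul_eq_mul_diagonal {n R : Type*} [Fintype n]
    [DecidableEq n] [CommRing R] [NoZeroDivisors R] {d e : n → R} {b : Matrix n n R}
    (h : Matrix.diagonal d * b = b * Matrix.diagonal e) (hde : ∀ i j, d i ≠ e j) :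
    b = 0 := by
  ext i j
  have hij : (d i - e j) * b i j = 0 := by
    have := congrFun (congrFun h i) j
    rw [Matrix.diagonal_mul, Matrix.mul_diagonal] at this
    linear_combination this
  exact (mul_eq_zero.mp hij).resolve_left (sub_ne_zero.mpr (hde i j))

lemma Complex.ne_mul_pow_three_of_pow_eight {x y z : ℂ} (hx : x ^ 8 = I) (hy : y ^ 8 = I)
    (hz : z ^ 8 = 1) : x ≠ z * y ^ 3 := by
  intro h
  have h8 : I = -I := by
    calc I = (z * y ^ 3) ^ 8 := by rw [← h, hx]
      _ = z ^ 8 * (y ^ 8) ^ 3 := by ring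
      _ = -I := by rw [hz, hy]; simp [pow_succ]
  exact I_ne_zero (by linear_combination h8 / 2)

lemma Complex.I_zpow_pow_eight (r : ℤ) : (I ^ r) ^ 8 = 1 := by
  rw [← zpow_natCast, ← zpow_mul, mul_comm, zpow_mul]
  norm_num [pow_succ]

lemma Complex.exp_int_mul_pi_I_div_sixteen_pow_eight {m : ℤ} (hm : m % 4 = 1) :
    Complex.exp (m * ((Real.pi : ℂ) * I / 16)) ^ 8 = I := by
  obtain ⟨k, rfl⟩ : ∃ k, m = 4 * k + 1 := ⟨m / 4, by omega⟩
  rw [← Complex.exp_nat_mul]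
  have : ((8 : ℕ) : ℂ) * (((4 * k + 1 : ℤ) : ℂ) * ((Real.pi : ℂ) * I / 16))
      = k * (2 * Real.pi * I) + Real.pi / 2 * I := by push_cast; ring
  rw [this, Complex.exp_add, Complex.exp_int_mul_two_pi_mul_I, Complex.exp_pi_div_two_mul_I]
  ring

lemma aZ8_eq_diagonal : aZ8 = Matrix.diagonal fun j =>
    Complex.exp ((![5, 9, 17, 1] : Fin 4 → ℤ) j * ((Real.pi : ℂ) * I / 16)) := by
  rw [aZ8, ← Matrix.diagonal_smul]
  congr 1
  ext j
  fin_cases j <;>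
    simp only [Fin.reduceFinMk, Fin.isValue, Pi.smul_apply, Matrix.cons_val, smul_eq_mul,
      mul_one, ← Complex.exp_add] <;> push_cast <;> ring_nf

/-- There is no invertible 4×4 complex matrix `b` with `a b = b a³ · i^r` for any
integer `r`, where `a` is the `ℤ₈` generator above: the extension `ℤ₈ ⋊ ℤ₂` with the
automorphism `a ↦ a³` cannot be realized. -/
theorem no_Z8_extension (b : Matrix (Fin 4) (Fin 4) ℂ) (hb : IsUnit b) (r : ℤ) :
    aZ8 * b ≠ I ^ r • (b * aZ8 ^ 3) := by
  intro h
  rw [aZ8_eq_diagonal, Matrix.diagonal_pow, ← Matrix.mul_smul, ← Matrix.diagonal_smul] at h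
  refine hb.ne_zero (Matrix.eq_zero_of_diagonal_mul_eq_mul_diagonal h fun j l => ?_)
  have hm : ∀ k : Fin 4, (![5, 9, 17, 1] : Fin 4 → ℤ) k % 4 = 1 := by decide
  exact Complex.ne_mul_pow_three_of_pow_eight
    (Complex.exp_int_mul_pi_I_div_sixteen_pow_eight (hm j))
    (Complex.exp_int_mul_pi_I_div_sixteen_pow_eight (hm l)) (Complex.I_zpow_pow_eight r)
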